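/- arXiv:0803.3533 — 4 statements merged into one kernel-verified Lean document; each statement's English description precedes it below -/
import Mathlib

section
/- Let F̃(z₀, z) = F(|z₀|²) − ‖z‖² on ℂ × ℂ^{n−1}, where F is smooth. Then the Monge–Ampère determinant J[F̃] = (−1)ⁿ det of the (n+1)×(n+1) bordered complex Hessian matrix [[F̃, ∂F̃/∂z₀, ∂_z F̃],[∂F̃/∂z̄₀, ∂²F̃/∂z₀∂z̄₀, ∂_z(∂F̃/∂z̄₀)],[∂_{z̄}F̃, ∂_{z̄}(∂F̃/∂z̄₀), ∂_{z̄}∂_z F̃]] equals −F(|z₀|²)² · ∂²(log F(|z₀|²))/∂z₀∂z̄₀. -/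
open Complex

/-- Wirtinger derivative `∂/∂z` of a function `f : ℂ → ℂ` at `w`. -/
noncomputable def dz (f : ℂ → ℂ) (w : ℂ) : ℂ :=
  (1 / 2) * (deriv (fun t : ℝ => f (w + t)) 0 -
    Complex.I * deriv (fun t : ℝ => f (w + t * Complex.I)) 0)

/-- Wirtinger derivative `∂/∂z̄` of a function `f : ℂ → ℂ` at `w`. -/
noncomputable def dzbar (f : ℂ → ℂ) (w : ℂ) : ℂ :=
  (1 / 2) * (deriv (fun t : ℝ => f (w + t)) 0 +
    Complex.I * deriv (fun t : ℝ => f (w + t * Complex.I)) 0)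

lemma hasDerivAt_normSq_re (w : ℂ) :
    HasDerivAt (fun t : ℝ => normSq (w + t)) (2 * w.re) 0 := by
  have h : (fun t : ℝ => normSq (w + t)) = fun t : ℝ => (w.re + t) ^ 2 + w.im ^ 2 := by
    funext t
    simp [Complex.normSq_apply]
    ring
  rw [h]
  have h1 : HasDerivAt (fun t : ℝ => (w.re + t) ^ 2 + w.im ^ 2)
      (2 * (w.re + 0) ^ 1 * 1) 0 :=
    (((hasDerivAt_id (0:ℝ)).const_add w.re).pow 2).add_const _
  simpa using h1

lemma hasDerivAt_normSq_im (w : ℂ) :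
    HasDerivAt (fun t : ℝ => normSq (w + t * I)) (2 * w.im) 0 := by
  have h : (fun t : ℝ => normSq (w + t * I)) = fun t : ℝ => (w.im + t) ^ 2 + w.re ^ 2 := by
    funext t
    simp [Complex.normSq_apply]
    ring
  rw [h]
  have h1 : HasDerivAt (fun t : ℝ => (w.im + t) ^ 2 + w.re ^ 2)
      (2 * (w.im + 0) ^ 1 * 1) 0 :=
    (((hasDerivAt_id (0:ℝ)).const_add w.im).pow 2).add_const _
  simpa using h1

lemma conj_eq' (w : ℂ) : (starRingEnd ℂ) w = (w.re : ℂ) - w.im * I := by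
  simp [Complex.ext_iff]

lemma dz_real_comp (φ : ℝ → ℝ) (φ' : ℝ) (a w : ℂ)
    (h : HasDerivAt φ φ' (normSq w)) :
    dz (fun u => a + (φ (normSq u) : ℂ)) w = φ' * (starRingEnd ℂ) w := by
  have h1 : HasDerivAt (fun t : ℝ => a + (φ (normSq (w + t)) : ℂ))
      ((φ' * (2 * w.re) : ℝ) : ℂ) 0 :=
    (((by simpa using h : HasDerivAt φ φ' (normSq (w + ((0:ℝ):ℂ)))).comp 0
      (hasDerivAt_normSq_re w)).ofReal_comp).const_add a
  have h2 : HasDerivAt (fun t : ℝ => a + (φ (normSq (w + t * I)) : ℂ))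
      ((φ' * (2 * w.im) : ℝ) : ℂ) 0 :=
    (((by simpa using h : HasDerivAt φ φ' (normSq (w + ((0:ℝ):ℂ) * I))).comp 0
      (hasDerivAt_normSq_im w)).ofReal_comp).const_add a
  simp only [dz, h1.deriv, h2.deriv, conj_eq']
  push_cast
  ring

lemma dzbar_real_comp (φ : ℝ → ℝ) (φ' : ℝ) (a w : ℂ)
    (h : HasDerivAt φ φ' (normSq w)) :
    dzbar (fun u => a + (φ (normSq u) : ℂ)) w = φ' * w := by
  have h1 : HasDerivAt (fun t : ℝ => a + (φ (normSq (w + t)) : ℂ))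
      ((φ' * (2 * w.re) : ℝ) : ℂ) 0 :=
    (((by simpa using h : HasDerivAt φ φ' (normSq (w + ((0:ℝ):ℂ)))).comp 0
      (hasDerivAt_normSq_re w)).ofReal_comp).const_add a
  have h2 : HasDerivAt (fun t : ℝ => a + (φ (normSq (w + t * I)) : ℂ))
      ((φ' * (2 * w.im) : ℝ) : ℂ) 0 :=
    (((by simpa using h : HasDerivAt φ φ' (normSq (w + ((0:ℝ):ℂ) * I))).comp 0
      (hasDerivAt_normSq_im w)).ofReal_comp).const_add a
  simp only [dzbar, h1.deriv, h2.deriv]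
  have hw : w = (w.re : ℂ) + w.im * I := by simp [Complex.ext_iff]
  conv_rhs => rw [hw]
  push_cast
  ring

lemma hasDerivAt_ofReal_comp_re (φ : ℝ → ℝ) (φ' : ℝ) (w : ℂ)
    (h : HasDerivAt φ φ' (normSq w)) :
    HasDerivAt (fun t : ℝ => (φ (normSq (w + t)) : ℂ)) ((φ' * (2 * w.re) : ℝ) : ℂ) 0 :=
  ((by simpa using h : HasDerivAt φ φ' (normSq (w + ((0:ℝ):ℂ)))).comp 0
      (hasDerivAt_normSq_re w)).ofReal_comp

lemma hasDerivAt_ofReal_comp_im (φ : ℝ → ℝ) (φ' : ℝ) (w : ℂ)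
    (h : HasDerivAt φ φ' (normSq w)) :
    HasDerivAt (fun t : ℝ => (φ (normSq (w + t * I)) : ℂ)) ((φ' * (2 * w.im) : ℝ) : ℂ) 0 :=
  ((by simpa using h : HasDerivAt φ φ' (normSq (w + ((0:ℝ):ℂ) * I))).comp 0
      (hasDerivAt_normSq_im w)).ofReal_comp

lemma dzbar_mul_conj (φ : ℝ → ℝ) (φ' : ℝ) (w : ℂ)
    (h : HasDerivAt φ φ' (normSq w)) :
    dzbar (fun u => (φ (normSq u) : ℂ) * (starRingEnd ℂ) u) w
      = φ' * normSq w + φ (normSq w) := by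
  have e1 : (fun t : ℝ => (φ (normSq (w + t)) : ℂ) * (starRingEnd ℂ) (w + t))
      = fun t : ℝ => (φ (normSq (w + t)) : ℂ) * ((starRingEnd ℂ) w + t) := by
    funext t
    rw [show (starRingEnd ℂ) (w + (t:ℂ)) = (starRingEnd ℂ) w + (t:ℂ) by
      rw [map_add, Complex.conj_ofReal]]
  have e2 : (fun t : ℝ => (φ (normSq (w + t * I)) : ℂ) * (starRingEnd ℂ) (w + t * I))
      = fun t : ℝ => (φ (normSq (w + t * I)) : ℂ) * ((starRingEnd ℂ) w - t * I) := by
    funext t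
    rw [show (starRingEnd ℂ) (w + (t:ℂ) * I) = (starRingEnd ℂ) w - (t:ℂ) * I by
      rw [map_add, map_mul, Complex.conj_ofReal, Complex.conj_I]; ring]
  have hg1 : HasDerivAt (fun t : ℝ => (starRingEnd ℂ) w + (t : ℂ)) 1 0 := by
    simpa using (Complex.ofRealCLM.hasDerivAt (x := (0:ℝ))).const_add ((starRingEnd ℂ) w)
  have hg2 : HasDerivAt (fun t : ℝ => (starRingEnd ℂ) w - (t : ℂ) * I) (-I) 0 := by
    simpa using ((Complex.ofRealCLM.hasDerivAt (x := (0:ℝ))).mul_const I).const_sub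
      ((starRingEnd ℂ) w)
  have h1 : HasDerivAt (fun t : ℝ => (φ (normSq (w + t)) : ℂ) * ((starRingEnd ℂ) w + t)) _ 0 :=
    (hasDerivAt_ofReal_comp_re φ φ' w h).mul hg1
  have h2 : HasDerivAt (fun t : ℝ => (φ (normSq (w + t * I)) : ℂ) * ((starRingEnd ℂ) w - t * I)) _ 0 :=
    (hasDerivAt_ofReal_comp_im φ φ' w h).mul hg2
  simp only [dzbar, e1, e2, h1.deriv, h2.deriv, Complex.ofReal_zero, add_zero, zero_mul,
    sub_zero, mul_one, mul_zero, zero_add]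
  have hn : ((normSq w : ℝ) : ℂ) = (w.re:ℂ)^2 + (w.im:ℂ)^2 := by
    rw [Complex.normSq_apply]; push_cast; ring
  rw [conj_eq', hn]
  push_cast
  ring_nf
  rw [Complex.I_sq]
  ring

lemma dz_const (c p : ℂ) : dz (fun _ => c) p = 0 := by
  simp [dz]

lemma dzbar_const (c p : ℂ) : dzbar (fun _ => c) p = 0 := by
  simp [dzbar]

lemma dzbar_conj_affine (a b p : ℂ) :
    dzbar (fun u => a + b * (starRingEnd ℂ) u) p = b := by
  have e1 : (fun t : ℝ => a + b * (starRingEnd ℂ) (p + t))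
      = fun t : ℝ => a + b * ((starRingEnd ℂ) p + t) := by
    funext t
    rw [show (starRingEnd ℂ) (p + (t:ℂ)) = (starRingEnd ℂ) p + (t:ℂ) by
      rw [map_add, Complex.conj_ofReal]]
  have e2 : (fun t : ℝ => a + b * (starRingEnd ℂ) (p + t * I))
      = fun t : ℝ => a + b * ((starRingEnd ℂ) p - t * I) := by
    funext t
    rw [show (starRingEnd ℂ) (p + (t:ℂ) * I) = (starRingEnd ℂ) p - (t:ℂ) * I by
      rw [map_add, map_mul, Complex.conj_ofReal, Complex.conj_I]; ring]
  have hg1 : HasDerivAt (fun t : ℝ => a + b * ((starRingEnd ℂ) p + (t : ℂ))) b 0 := by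
    simpa using (((Complex.ofRealCLM.hasDerivAt (x := (0:ℝ))).const_add
      ((starRingEnd ℂ) p)).const_mul b).const_add a
  have hg2 : HasDerivAt (fun t : ℝ => a + b * ((starRingEnd ℂ) p - (t : ℂ) * I)) (-(b * I)) 0 := by
    simpa using ((((Complex.ofRealCLM.hasDerivAt (x := (0:ℝ))).mul_const I).const_sub
      ((starRingEnd ℂ) p)).const_mul b).const_add a
  simp only [dzbar, e1, e2, hg1.deriv, hg2.deriv]
  ring_nf
  rw [Complex.I_sq]
  ring


/-- The defining function `F̃(z₀,z) = F(|z₀|²) − ‖z‖²` (as a complex-valued function). -/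
noncomputable def Ftil (F : ℝ → ℝ) (m : ℕ) (z0 : ℂ) (z : Fin m → ℂ) : ℂ :=
  (F (normSq z0) : ℂ) - ∑ j, (normSq (z j) : ℂ)

section entries
variable {F : ℝ → ℝ} {m : ℕ}

lemma hDF (hF : ContDiff ℝ (⊤ : ℕ∞) F) (x : ℝ) : HasDerivAt F (deriv F x) x :=
  ((hF.differentiable (by simp)) x).hasDerivAt

lemma hDF2 (hF : ContDiff ℝ (⊤ : ℕ∞) F) (x : ℝ) : HasDerivAt (deriv F) (deriv (deriv F) x) x := by
  have h : ContDiff ℝ (⊤ : ℕ∞) (deriv F) :=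
    (contDiff_infty_iff_deriv.mp (hF.of_le (by simp))).2
  exact ((h.differentiable (by simp)) x).hasDerivAt

lemma dz_Ftil_fst (hF : ContDiff ℝ (⊤ : ℕ∞) F) (z0 : ℂ) (z : Fin m → ℂ) :
    dz (fun w => Ftil F m w z) z0 = ((deriv F (normSq z0) : ℝ) : ℂ) * (starRingEnd ℂ) z0 := by
  rw [show (fun w => Ftil F m w z)
      = fun w => (-(∑ j, ((normSq (z j) : ℝ) : ℂ))) + ((F (normSq w) : ℝ) : ℂ) by
    funext w; simp only [Ftil]; ring]
  exact dz_real_comp F _ _ z0 (hDF hF _)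

lemma dzbar_Ftil_fst (hF : ContDiff ℝ (⊤ : ℕ∞) F) (z0 : ℂ) (z : Fin m → ℂ) :
    dzbar (fun w => Ftil F m w z) z0 = ((deriv F (normSq z0) : ℝ) : ℂ) * z0 := by
  rw [show (fun w => Ftil F m w z)
      = fun w => (-(∑ j, ((normSq (z j) : ℝ) : ℂ))) + ((F (normSq w) : ℝ) : ℂ) by
    funext w; simp only [Ftil]; ring]
  exact dzbar_real_comp F _ _ z0 (hDF hF _)

lemma Ftil_update (F : ℝ → ℝ) (m : ℕ) (z0 : ℂ) (u : Fin m → ℂ) (l : Fin m) :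
    (fun w' => Ftil F m z0 (Function.update u l w'))
      = fun w' => (((F (normSq z0) : ℂ) - ∑ j ∈ Finset.univ \ {l}, (normSq (u j) : ℂ)))
          + ((-(normSq w') : ℝ) : ℂ) := by
  funext w'
  simp only [Ftil]
  rw [show (fun j => ((normSq (Function.update u l w' j) : ℝ) : ℂ))
      = Function.update (fun j => ((normSq (u j) : ℝ) : ℂ)) l ((normSq w' : ℝ) : ℂ) from
    funext fun j => Function.apply_update (fun _ x => ((normSq x : ℝ) : ℂ)) u l w' j]
  rw [Finset.sum_update_of_mem (Finset.mem_univ l)]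
  push_cast
  ring

lemma dz_Ftil_update (z0 : ℂ) (u : Fin m → ℂ) (l : Fin m) :
    dz (fun w' => Ftil F m z0 (Function.update u l w')) (u l)
      = -((starRingEnd ℂ) (u l)) := by
  rw [Ftil_update]
  have := dz_real_comp (fun x : ℝ => -x) (-1)
    ((F (normSq z0) : ℂ) - ∑ j ∈ Finset.univ \ {l}, (normSq (u j) : ℂ)) (u l)
    (hasDerivAt_neg' _)
  simpa using this

lemma dzbar_Ftil_update (z0 : ℂ) (u : Fin m → ℂ) (l : Fin m) :
    dzbar (fun w' => Ftil F m z0 (Function.update u l w')) (u l) = -(u l) := by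
  rw [Ftil_update]
  have := dzbar_real_comp (fun x : ℝ => -x) (-1)
    ((F (normSq z0) : ℂ) - ∑ j ∈ Finset.univ \ {l}, (normSq (u j) : ℂ)) (u l)
    (hasDerivAt_neg' _)
  simpa using this

end entries

def e2 : Fin 2 ≃ Unit ⊕ Unit where
  toFun := ![Sum.inl (), Sum.inr ()]
  invFun := Sum.elim (fun _ => 0) (fun _ => 1)
  left_inv := by decide
  right_inv := by rintro (⟨⟩ | ⟨⟩) <;> rfl

lemma det_two (M : Matrix (Unit ⊕ Unit) (Unit ⊕ Unit) ℂ) :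
    M.det = M (.inl ()) (.inl ()) * M (.inr ()) (.inr ())
      - M (.inl ()) (.inr ()) * M (.inr ()) (.inl ()) := by
  rw [← Matrix.det_submatrix_equiv_self e2 M, Matrix.det_fin_two]
  simp [Matrix.submatrix, e2]


/-- The bordered complex Hessian of `F̃`, an `(m+2) × (m+2)` matrix indexed by
`Unit ⊕ Unit ⊕ Fin m` (first index: no derivative; second: the `z₀` direction; rest:
the `z₁, …, z_m` directions); rows carry `∂/∂z̄`, columns carry `∂/∂z`. -/
noncomputable def mongeAmpereMatrix (F : ℝ → ℝ) (m : ℕ) (z0 : ℂ) (z : Fin m → ℂ) :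
    Matrix (Unit ⊕ Unit ⊕ Fin m) (Unit ⊕ Unit ⊕ Fin m) ℂ :=
  fun i j =>
    match i, j with
    | .inl _, .inl _ => Ftil F m z0 z
    | .inl _, .inr (.inl _) => dz (fun w => Ftil F m w z) z0
    | .inl _, .inr (.inr k) => dz (fun w => Ftil F m z0 (Function.update z k w)) (z k)
    | .inr (.inl _), .inl _ => dzbar (fun w => Ftil F m w z) z0
    | .inr (.inl _), .inr (.inl _) => dzbar (fun w => dz (fun w' => Ftil F m w' z) w) z0
    | .inr (.inl _), .inr (.inr k) =>
        dz (fun w => dzbar (fun w' => Ftil F m w' (Function.update z k w)) z0) (z k)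
    | .inr (.inr k), .inl _ => dzbar (fun w => Ftil F m z0 (Function.update z k w)) (z k)
    | .inr (.inr k), .inr (.inl _) =>
        dzbar (fun w => dz (fun w' => Ftil F m w' (Function.update z k w)) z0) (z k)
    | .inr (.inr k), .inr (.inr l) =>
        dzbar (fun w =>
          dz (fun w' => Ftil F m z0 (Function.update (Function.update z k w) l w'))
            ((Function.update z k w) l)) (z k)

noncomputable def Pm (F : ℝ → ℝ) (m : ℕ) (z0 : ℂ) (z : Fin m → ℂ) :
    Matrix (Unit ⊕ Unit) (Unit ⊕ Unit) ℂ := fun i j =>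
  Sum.elim
    (fun _ => Sum.elim (fun _ => Ftil F m z0 z)
      (fun _ => ((deriv F (normSq z0) : ℝ) : ℂ) * (starRingEnd ℂ) z0) j)
    (fun _ => Sum.elim (fun _ => ((deriv F (normSq z0) : ℝ) : ℂ) * z0)
      (fun _ => ((deriv (deriv F) (normSq z0) : ℝ) : ℂ) * ((normSq z0 : ℝ) : ℂ)
        + ((deriv F (normSq z0) : ℝ) : ℂ)) j) i

noncomputable def Qm (m : ℕ) (z : Fin m → ℂ) : Matrix (Unit ⊕ Unit) (Fin m) ℂ :=
  fun i l => Sum.elim (fun _ => -((starRingEnd ℂ) (z l))) (fun _ => (0 : ℂ)) i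

noncomputable def Rm (m : ℕ) (z : Fin m → ℂ) : Matrix (Fin m) (Unit ⊕ Unit) ℂ :=
  fun l j => Sum.elim (fun _ => -(z l)) (fun _ => (0 : ℂ)) j

lemma hM_blocks (F : ℝ → ℝ) (hF : ContDiff ℝ (⊤ : ℕ∞) F) (m : ℕ) (z0 : ℂ) (z : Fin m → ℂ) :
    (mongeAmpereMatrix F m z0 z).submatrix
      (Equiv.sumAssoc Unit Unit (Fin m)) (Equiv.sumAssoc Unit Unit (Fin m))
      = Matrix.fromBlocks (Pm F m z0 z) (Qm m z) (Rm m z) (-1) := by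
  ext i j
  rcases i with (i | i) | k <;> rcases j with (j | j) | l
  · rfl
  · exact dz_Ftil_fst hF z0 z
  · exact dz_Ftil_update z0 z l
  · exact dzbar_Ftil_fst hF z0 z
  · show dzbar (fun w => dz (fun w' => Ftil F m w' z) w) z0 = _
    rw [show (fun w => dz (fun w' => Ftil F m w' z) w)
        = fun w => ((deriv F (normSq w) : ℝ) : ℂ) * (starRingEnd ℂ) w from
      funext fun w => dz_Ftil_fst hF w z]
    exact dzbar_mul_conj (deriv F) _ z0 (hDF2 hF _)
  · show dz (fun w => dzbar (fun w' => Ftil F m w' (Function.update z l w)) z0) (z l) = 0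
    rw [show (fun w => dzbar (fun w' => Ftil F m w' (Function.update z l w)) z0)
        = fun _ => ((deriv F (normSq z0) : ℝ) : ℂ) * z0 from
      funext fun w => dzbar_Ftil_fst hF z0 _]
    exact dz_const _ _
  · exact dzbar_Ftil_update z0 z k
  · show dzbar (fun w => dz (fun w' => Ftil F m w' (Function.update z k w)) z0) (z k) = 0
    rw [show (fun w => dz (fun w' => Ftil F m w' (Function.update z k w)) z0)
        = fun _ => ((deriv F (normSq z0) : ℝ) : ℂ) * (starRingEnd ℂ) z0 from
      funext fun w => dz_Ftil_fst hF z0 _]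
    exact dzbar_const _ _
  · show dzbar (fun w =>
        dz (fun w' => Ftil F m z0 (Function.update (Function.update z k w) l w'))
          ((Function.update z k w) l)) (z k)
      = (-1 : Matrix (Fin m) (Fin m) ℂ) k l
    rw [show (fun w => dz (fun w' => Ftil F m z0
        (Function.update (Function.update z k w) l w')) ((Function.update z k w) l))
        = fun w => -((starRingEnd ℂ) ((Function.update z k w) l)) from
      funext fun w => dz_Ftil_update z0 (Function.update z k w) l]
    by_cases hkl : l = k
    · subst hkl
      rw [show (fun w => -((starRingEnd ℂ) (Function.update z l w l)))
          = fun w => (0 : ℂ) + (-1) * (starRingEnd ℂ) w from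
        funext fun w => by rw [Function.update_self]; ring]
      rw [dzbar_conj_affine]
      simp [Matrix.one_apply]
    · rw [show (fun w => -((starRingEnd ℂ) (Function.update z k w l)))
          = fun _ => -((starRingEnd ℂ) (z l)) from
        funext fun w => by rw [Function.update_of_ne hkl]]
      rw [dzbar_const]
      simp [Matrix.one_apply, Ne.symm hkl]

lemma det_mongeAmpere (F : ℝ → ℝ) (hF : ContDiff ℝ (⊤ : ℕ∞) F) (m : ℕ) (z0 : ℂ) (z : Fin m → ℂ) :
    (mongeAmpereMatrix F m z0 z).det
      = (-1 : ℂ) ^ m * ((Pm F m z0 z + Qm m z * Rm m z).det) := by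
  haveI h1 : Invertible (1 : Matrix (Fin m) (Fin m) ℂ) := invertibleOne
  haveI : Invertible (-(1 : Matrix (Fin m) (Fin m) ℂ)) := invertibleNeg 1
  rw [← Matrix.det_submatrix_equiv_self (Equiv.sumAssoc Unit Unit (Fin m)),
    hM_blocks F hF m z0 z, Matrix.det_fromBlocks₂₂]
  congr 1
  · rw [Matrix.det_neg, Matrix.det_one]; simp
  · congr 1
    rw [invOf_neg, invOf_one, Matrix.mul_neg, Matrix.mul_one, Matrix.neg_mul, sub_neg_eq_add]

lemma det_PQR (F : ℝ → ℝ) (m : ℕ) (z0 : ℂ) (z : Fin m → ℂ) :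
    (Pm F m z0 z + Qm m z * Rm m z).det
      = ((F (normSq z0) : ℝ) : ℂ)
          * (((deriv (deriv F) (normSq z0) : ℝ) : ℂ) * ((normSq z0 : ℝ) : ℂ)
            + ((deriv F (normSq z0) : ℝ) : ℂ))
        - (((deriv F (normSq z0) : ℝ) : ℂ) * (starRingEnd ℂ) z0)
          * (((deriv F (normSq z0) : ℝ) : ℂ) * z0) := by
  rw [det_two]
  have hQR : ∀ i j, (Qm m z * Rm m z) i j
      = Sum.elim (fun _ => Sum.elim (fun _ => ∑ l, ((normSq (z l) : ℝ) : ℂ))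
          (fun _ => (0:ℂ)) j) (fun _ => (0:ℂ)) i := by
    intro i j
    rcases i with i | i <;> rcases j with j | j <;>
      simp [Matrix.mul_apply, Qm, Rm, neg_mul_neg, mul_comm, Complex.mul_conj]
  have h11 : Ftil F m z0 z + ∑ l, ((normSq (z l) : ℝ) : ℂ) = ((F (normSq z0) : ℝ) : ℂ) := by
    simp [Ftil]
  simp only [Matrix.add_apply, hQR, Sum.elim_inl, Sum.elim_inr, Pm, add_zero]
  rw [h11]

lemma dz_logF (F : ℝ → ℝ) (hF : ContDiff ℝ (⊤ : ℕ∞) F) (hFpos : ∀ x : ℝ, 0 < F x) (w : ℂ) :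
    dz (fun w' => (Real.log (F (normSq w')) : ℂ)) w
      = ((deriv F (normSq w) / F (normSq w) : ℝ) : ℂ) * (starRingEnd ℂ) w := by
  rw [show (fun w' => (Real.log (F (normSq w')) : ℂ))
      = fun w' => (0 : ℂ) + ((Real.log (F (normSq w')) : ℝ) : ℂ) from
    funext fun w' => (zero_add _).symm]
  exact dz_real_comp (fun x => Real.log (F x)) _ 0 w
    ((hDF hF _).log (ne_of_gt (hFpos _)))

/-- the Monge–Ampère determinant `J[F̃] = (−1)ⁿ det` of the bordered
complex Hessian of `F̃(z₀,z) = F(|z₀|²) − ‖z‖²` (with `n = m + 1` the complex dimension)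
equals `−F(|z₀|²)² ∂²(log F(|z₀|²))/∂z₀∂z̄₀`. -/
theorem mongeAmpere_hartogs (F : ℝ → ℝ) (hF : ContDiff ℝ (⊤ : ℕ∞) F)
    (hFpos : ∀ x : ℝ, 0 < F x) (m : ℕ) (z0 : ℂ) (z : Fin m → ℂ) :
    (-1 : ℂ) ^ (m + 1) * (mongeAmpereMatrix F m z0 z).det
      = -((F (normSq z0) : ℂ)) ^ 2 *
          dzbar (fun w => dz (fun w' => (Real.log (F (normSq w')) : ℂ)) w) z0 := by
  have hdiv : HasDerivAt (fun x => deriv F x / F x)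
      ((deriv (deriv F) (normSq z0) * F (normSq z0)
        - deriv F (normSq z0) * deriv F (normSq z0)) / F (normSq z0) ^ 2) (normSq z0) :=
    (hDF2 hF _).div (hDF hF _) (ne_of_gt (hFpos _))
  rw [det_mongeAmpere F hF, det_PQR]
  rw [show (fun w => dz (fun w' => (Real.log (F (normSq w')) : ℂ)) w)
      = fun w => ((deriv F (normSq w) / F (normSq w) : ℝ) : ℂ) * (starRingEnd ℂ) w from
    funext fun w => dz_logF F hF hFpos w]
  rw [dzbar_mul_conj (fun x => deriv F x / F x) _ z0 hdiv]
  rw [← mul_assoc]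
  rw [show ((-1 : ℂ)) ^ (m + 1) * ((-1 : ℂ)) ^ m = -1 by
    rw [← pow_add, show m + 1 + m = 2 * m + 1 by ring, pow_succ, pow_mul]; norm_num]
  have hz0 : (starRingEnd ℂ) z0 * z0 = ((normSq z0 : ℝ) : ℂ) := by
    rw [mul_comm]; exact_mod_cast Complex.mul_conj z0
  have ha : ((F (normSq z0) : ℝ) : ℂ) ≠ 0 := by
    exact_mod_cast (ne_of_gt (hFpos (normSq z0)))
  push_cast
  field_simp
  linear_combination (((deriv F (normSq z0) : ℝ) : ℂ) ^ 2) * hz0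
end

section
/- Let b ∈ (0,∞] and F : [0,b) → (0,∞) smooth with (xF'/F)' < 0. Define ψ(u) = ∫₀^u √(−(xF'/F)'|_{x=s²}) ds on (−√b, √b), and let M = {(u,v) : u² < b, v² < F(u²)}. Then the map Ψ : M → ℝ², Ψ(u,v) = (tanh ψ(u), v/(cosh(ψ(u))·√(F(u²)))), takes values in the open unit disk {x² + y² < 1} and is injective. -/
/-- The arc-length reparametrization `ψ(u) = ∫₀^u √(−(xF'/F)'|_{x=s²}) ds`. -/
noncomputable def hartogsPsi (F : ℝ → ℝ) (u : ℝ) : ℝ :=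
  ∫ s in (0 : ℝ)..u, Real.sqrt (-(deriv (fun x : ℝ => x * deriv F x / F x) (s ^ 2)))

/-- The map `Ψ(u,v) = (tanh ψ(u), v/(cosh ψ(u) √(F(u²))))`. -/
noncomputable def hartogsMap (F : ℝ → ℝ) (p : ℝ × ℝ) : ℝ × ℝ :=
  (Real.tanh (hartogsPsi F p.1),
    p.2 / (Real.cosh (hartogsPsi F p.1) * Real.sqrt (F (p.1 ^ 2))))

open Set MeasureTheory intervalIntegral

/-- `tanh` is injective. -/
lemma hartogs_tanh_injective : Function.Injective Real.tanh := by
  intro a b h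
  have ha := Real.cosh_pos a
  have hb := Real.cosh_pos b
  rw [Real.tanh_eq_sinh_div_cosh, Real.tanh_eq_sinh_div_cosh,
    div_eq_div_iff ha.ne' hb.ne'] at h
  have h0 : Real.sinh (a - b) = Real.sinh 0 := by
    rw [Real.sinh_sub, Real.sinh_zero]; linarith
  have := Real.sinh_injective h0
  linarith

/-- The integrand of `hartogsPsi` is interval integrable. -/
lemma hartogs_integrable (b : EReal) (hb : 0 < b) (F : ℝ → ℝ)
    (hF : ContDiffOn ℝ (⊤ : ℕ∞) F {x : ℝ | 0 ≤ x ∧ (x : EReal) < b})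
    (hFpos : ∀ x : ℝ, 0 ≤ x → (x : EReal) < b → 0 < F x)
    (u₁ u₂ : ℝ) (h₁ : ((u₁ ^ 2 : ℝ) : EReal) < b) (h₂ : ((u₂ ^ 2 : ℝ) : EReal) < b) :
    IntervalIntegrable
      (fun s : ℝ => Real.sqrt (-(deriv (fun x : ℝ => x * deriv F x / F x) (s ^ 2))))
      volume u₁ u₂ := by
  set S : Set ℝ := {x : ℝ | 0 ≤ x ∧ (x : EReal) < b} with hSdef
  set U : Set ℝ := {x : ℝ | 0 < x ∧ (x : EReal) < b} with hUdef
  set G : ℝ → ℝ := fun x : ℝ => x * deriv F x / F x with hGdef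
  have hUopen : IsOpen U := by
    have : U = Ioi (0 : ℝ) ∩ ((↑) : ℝ → EReal) ⁻¹' (Iio b) := rfl
    rw [this]
    exact isOpen_Ioi.inter (isOpen_Iio.preimage continuous_coe_real_ereal)
  have hUS : U ⊆ S := fun x hx => ⟨hx.1.le, hx.2⟩
  have hSnhds : ∀ x ∈ U, S ∈ nhds x := fun x hx =>
    Filter.mem_of_superset (hUopen.mem_nhds hx) hUS
  have hFpos' : ∀ x ∈ S, 0 < F x := fun x hx => hFpos x hx.1 hx.2
  have hconv : Convex ℝ S := by
    rw [convex_iff_ordConnected]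
    constructor
    intro x hx y hy z hz
    exact ⟨le_trans hx.1 hz.1, lt_of_le_of_lt (EReal.coe_le_coe_iff.mpr hz.2) hy.2⟩
  obtain ⟨r₀, hr₀pos, hr₀b⟩ := EReal.exists_between_coe_real hb
  have hr₀pos' : (0 : ℝ) < r₀ := by exact_mod_cast hr₀pos
  have hIntNe : (interior S).Nonempty :=
    ⟨r₀, interior_maximal hUS hUopen ⟨hr₀pos', hr₀b⟩⟩
  have hUniq : UniqueDiffOn ℝ S := uniqueDiffOn_convex hconv hIntNe
  set f₁ : ℝ → ℝ := derivWithin F S with hf₁def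
  set f₂ : ℝ → ℝ := derivWithin f₁ S with hf₂def
  have hF1 : ContDiffOn ℝ (⊤ : ℕ∞) f₁ S := hF.derivWithin hUniq (by simp)
  have hF2 : ContDiffOn ℝ (⊤ : ℕ∞) f₂ S := hF1.derivWithin hUniq (by simp)
  have hderivAtF : ∀ x ∈ U, HasDerivAt F (f₁ x) x := by
    intro x hx
    exact (((hF.differentiableOn (by simp)) x (hUS hx)).hasDerivWithinAt).hasDerivAt
      (hSnhds x hx)
  have hderivAtf₁ : ∀ x ∈ U, HasDerivAt f₁ (f₂ x) x := by
    intro x hx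
    exact (((hF1.differentiableOn (by simp)) x (hUS hx)).hasDerivWithinAt).hasDerivAt
      (hSnhds x hx)
  set C : ℝ → ℝ :=
    fun x => ((1 * f₁ x + x * f₂ x) * F x - x * f₁ x * f₁ x) / F x ^ 2 with hCdef
  have hderivG : ∀ x ∈ U, deriv G x = C x := by
    intro x hx
    have hxU : U ∈ nhds x := hUopen.mem_nhds hx
    have heq : G =ᶠ[nhds x] fun y => y * f₁ y / F y := by
      filter_upwards [hxU] with y hy
      have h : deriv F y = f₁ y := (derivWithin_of_mem_nhds (hSnhds y hy)).symm
      simp only [hGdef]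
      rw [h]
    rw [heq.deriv_eq]
    have hF' := hderivAtF x hx
    have hf₁' := hderivAtf₁ x hx
    have hFx : F x ≠ 0 := (hFpos' x (hUS hx)).ne'
    have hnum : HasDerivAt (fun y => y * f₁ y) (1 * f₁ x + x * f₂ x) x :=
      (hasDerivAt_id' (x := x)).mul hf₁'
    exact (hnum.div hF' hFx).deriv
  have hCcont : ContinuousOn C S := by
    apply ContinuousOn.div
    · exact (((continuousOn_const.mul hF1.continuousOn).add
        (continuousOn_id.mul hF2.continuousOn)).mul hF.continuousOn).sub
        ((continuousOn_id.mul hF1.continuousOn).mul hF1.continuousOn)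
    · exact hF.continuousOn.pow 2
    · intro x hx; exact pow_ne_zero 2 (hFpos' x hx).ne'
  have hgmeas : Measurable fun s : ℝ => Real.sqrt (-(deriv G (s ^ 2))) := by
    apply Real.continuous_sqrt.measurable.comp
    exact ((measurable_deriv G).comp (measurable_id.pow_const 2)).neg
  set r : ℝ := max |u₁| |u₂| with hrdef
  have hr2 : ((r ^ 2 : ℝ) : EReal) < b := by
    have : r ^ 2 = u₁ ^ 2 ∨ r ^ 2 = u₂ ^ 2 := by
      rcases max_cases |u₁| |u₂| with ⟨hm, _⟩ | ⟨hm, _⟩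
      · left; rw [hrdef, hm, sq_abs]
      · right; rw [hrdef, hm, sq_abs]
    rcases this with h | h <;> rw [h] <;> assumption
  have hsub : Icc (0 : ℝ) (r ^ 2) ⊆ S := by
    intro x hx
    refine ⟨hx.1, lt_of_le_of_lt ?_ hr2⟩
    exact_mod_cast hx.2
  obtain ⟨M, hM⟩ := (isCompact_Icc : IsCompact (Icc (0 : ℝ) (r ^ 2))).exists_bound_of_continuousOn
    (hCcont.mono hsub)
  set B : ℝ := max M |deriv G 0| with hBdef
  have hbound : ∀ s ∈ Icc (-r) r, ‖Real.sqrt (-(deriv G (s ^ 2)))‖ ≤ Real.sqrt B := by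
    intro s hs
    have hs2mem : s ^ 2 ∈ Icc (0 : ℝ) (r ^ 2) := ⟨sq_nonneg s, sq_le_sq' hs.1 hs.2⟩
    have hKB : -(deriv G (s ^ 2)) ≤ B := by
      rcases eq_or_ne s 0 with h0 | h0
      · rw [h0]
        norm_num
        calc -(deriv G 0) ≤ |deriv G 0| := neg_le_abs _
          _ ≤ B := le_max_right _ _
      · have hs2U : s ^ 2 ∈ U := ⟨pow_two_pos_of_ne_zero h0, (hsub hs2mem).2⟩
        rw [hderivG _ hs2U]
        calc -(C (s ^ 2)) ≤ |C (s ^ 2)| := neg_le_abs _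
          _ ≤ M := by have := hM _ hs2mem; rwa [Real.norm_eq_abs] at this
          _ ≤ B := le_max_left _ _
    rw [Real.norm_eq_abs, abs_of_nonneg (Real.sqrt_nonneg _)]
    exact Real.sqrt_le_sqrt hKB
  rw [intervalIntegrable_iff]
  apply Measure.integrableOn_of_bounded (M := Real.sqrt B)
  · rw [Set.uIoc, Real.volume_Ioc]
    exact ENNReal.ofReal_ne_top
  · exact hgmeas.aestronglyMeasurable
  · rw [ae_restrict_iff' measurableSet_uIoc]
    filter_upwards with x hx
    apply hbound
    simp only [Set.uIoc, Set.mem_Ioc] at hx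
    constructor
    · have h1 : -r ≤ min u₁ u₂ :=
        le_min ((neg_le_neg (le_max_left _ _)).trans (neg_abs_le u₁))
          ((neg_le_neg (le_max_right _ _)).trans (neg_abs_le u₂))
      exact h1.trans (le_of_lt (by exact_mod_cast hx.1))
    · have h2 : max u₁ u₂ ≤ r :=
        max_le ((le_abs_self u₁).trans (le_max_left _ _))
          ((le_abs_self u₂).trans (le_max_right _ _))
      exact (by exact_mod_cast hx.2 : x ≤ max u₁ u₂).trans h2

/-- `ψ` is strictly monotone on `{u | u² < b}`. -/
lemma hartogsPsi_strictMono (b : EReal) (hb : 0 < b) (F : ℝ → ℝ)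
    (hF : ContDiffOn ℝ (⊤ : ℕ∞) F {x : ℝ | 0 ≤ x ∧ (x : EReal) < b})
    (hFpos : ∀ x : ℝ, 0 ≤ x → (x : EReal) < b → 0 < F x)
    (hK : ∀ x : ℝ, 0 ≤ x → (x : EReal) < b →
      deriv (fun x : ℝ => x * deriv F x / F x) x < 0)
    (u₁ u₂ : ℝ) (h₁ : ((u₁ ^ 2 : ℝ) : EReal) < b) (h₂ : ((u₂ ^ 2 : ℝ) : EReal) < b)
    (hlt : u₁ < u₂) : hartogsPsi F u₁ < hartogsPsi F u₂ := by
  have h0 : (((0 : ℝ) ^ 2 : ℝ) : EReal) < b := by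
    have : (((0 : ℝ) ^ 2 : ℝ) : EReal) = (0 : EReal) := by norm_num
    rw [this]; exact hb
  have hi1 := hartogs_integrable b hb F hF hFpos 0 u₁ h0 h₁
  have hi2 := hartogs_integrable b hb F hF hFpos 0 u₂ h0 h₂
  have hi12 := hartogs_integrable b hb F hF hFpos u₁ u₂ h₁ h₂
  have hpos : 0 < ∫ s in u₁..u₂,
      Real.sqrt (-(deriv (fun x : ℝ => x * deriv F x / F x) (s ^ 2))) := by
    apply intervalIntegral_pos_of_pos_on hi12 _ hlt
    intro s hs
    have hsq : s ^ 2 ≤ u₁ ^ 2 ∨ s ^ 2 ≤ u₂ ^ 2 := by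
      rcases le_total s 0 with h | h
      · left; nlinarith [hs.1]
      · right; nlinarith [hs.2]
    have hs2 : ((s ^ 2 : ℝ) : EReal) < b := by
      rcases hsq with h | h
      · exact lt_of_le_of_lt (by exact_mod_cast h) h₁
      · exact lt_of_le_of_lt (by exact_mod_cast h) h₂
    exact Real.sqrt_pos.mpr (neg_pos.mpr (hK (s ^ 2) (sq_nonneg s) hs2))
  have heq : hartogsPsi F u₂ - hartogsPsi F u₁ = ∫ s in u₁..u₂,
      Real.sqrt (-(deriv (fun x : ℝ => x * deriv F x / F x) (s ^ 2))) :=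
    integral_interval_sub_left hi2 hi1
  have : hartogsPsi F u₂ - hartogsPsi F u₁ > 0 := heq ▸ hpos
  linarith

/-- `Ψ` maps `M = {(u,v) : u² < b, v² < F(u²)}` into the open unit disk
and is injective on `M`. -/
theorem hartogsMap_into_disk_injective (b : EReal) (hb : 0 < b) (F : ℝ → ℝ)
    (hF : ContDiffOn ℝ (⊤ : ℕ∞) F {x : ℝ | 0 ≤ x ∧ (x : EReal) < b})
    (hFpos : ∀ x : ℝ, 0 ≤ x → (x : EReal) < b → 0 < F x)
    (hK : ∀ x : ℝ, 0 ≤ x → (x : EReal) < b →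
      deriv (fun x : ℝ => x * deriv F x / F x) x < 0) :
    (∀ p : ℝ × ℝ, ((p.1 ^ 2 : ℝ) : EReal) < b → p.2 ^ 2 < F (p.1 ^ 2) →
      (hartogsMap F p).1 ^ 2 + (hartogsMap F p).2 ^ 2 < 1) ∧
    Set.InjOn (hartogsMap F)
      {p : ℝ × ℝ | ((p.1 ^ 2 : ℝ) : EReal) < b ∧ p.2 ^ 2 < F (p.1 ^ 2)} := by
  constructor
  · intro p hp1 hp2
    set t : ℝ := hartogsPsi F p.1 with htdef
    have hf : 0 < F (p.1 ^ 2) := hFpos _ (sq_nonneg _) hp1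
    have hsqrt : Real.sqrt (F (p.1 ^ 2)) ^ 2 = F (p.1 ^ 2) := Real.sq_sqrt hf.le
    have hc : 0 < Real.cosh t := Real.cosh_pos t
    have hcs : Real.cosh t ^ 2 = Real.sinh t ^ 2 + 1 := Real.cosh_sq t
    have hsf : 0 < Real.sqrt (F (p.1 ^ 2)) := Real.sqrt_pos.mpr hf
    show Real.tanh t ^ 2 + (p.2 / (Real.cosh t * Real.sqrt (F (p.1 ^ 2)))) ^ 2 < 1
    rw [Real.tanh_eq_sinh_div_cosh, div_pow, div_pow, mul_pow, hsqrt]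
    rw [div_add_div _ _ (by positivity) (by positivity), div_lt_one (by positivity)]
    nlinarith [mul_pos (pow_pos hc 2) hf, sq_nonneg (Real.sinh t), hp2, hcs, hc, hf]
  · intro p hp q hq h
    obtain ⟨hp1, hp2⟩ := hp
    obtain ⟨hq1, hq2⟩ := hq
    have h1 : Real.tanh (hartogsPsi F p.1) = Real.tanh (hartogsPsi F q.1) :=
      congrArg Prod.fst h
    have hψ : hartogsPsi F p.1 = hartogsPsi F q.1 := hartogs_tanh_injective h1
    have hu : p.1 = q.1 := by
      rcases lt_trichotomy p.1 q.1 with hlt | heq | hlt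
      · exact absurd hψ (hartogsPsi_strictMono b hb F hF hFpos hK _ _ hp1 hq1 hlt).ne
      · exact heq
      · exact absurd hψ.symm
          (hartogsPsi_strictMono b hb F hF hFpos hK _ _ hq1 hp1 hlt).ne
    have h2 : p.2 / (Real.cosh (hartogsPsi F p.1) * Real.sqrt (F (p.1 ^ 2)))
        = q.2 / (Real.cosh (hartogsPsi F q.1) * Real.sqrt (F (q.1 ^ 2))) :=
      congrArg Prod.snd h
    rw [← hu] at h2
    have hd : Real.cosh (hartogsPsi F p.1) * Real.sqrt (F (p.1 ^ 2)) ≠ 0 := by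
      have hf : 0 < F (p.1 ^ 2) := hFpos _ (sq_nonneg _) hp1
      positivity
    have hv : p.2 = q.2 := by
      field_simp at h2
      exact (div_left_inj' (Real.sqrt_ne_zero'.mpr (hFpos _ (sq_nonneg _) hp1))).mp h2
    exact Prod.ext hu hv
end

section
/- With notation as above (F smooth on [0,b) with (xF'/F)' < 0, ψ(u) = ∫₀^u √(−(xF'/F)'|_{x=s²}) ds, M = {(u,v) : u² < b, v² < F(u²)}, and Ψ(u,v) = (tanh ψ(u), v/(cosh(ψ(u))√(F(u²))))): the image Ψ(M) equals the full open unit disk if and only if ∫₀^{√b} √(−(xF'/F)'|_{x=u²}) du = +∞. -/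
open MeasureTheory Set

namespace HartogsAux

lemma tanh_lt_one (x : ℝ) : Real.tanh x < 1 := by
  rw [Real.tanh_eq_sinh_div_cosh, div_lt_one (Real.cosh_pos x)]
  nlinarith [Real.cosh_sub_sinh x, Real.exp_pos (-x)]

lemma tanh_lt_tanh {x y : ℝ} (h : x < y) : Real.tanh x < Real.tanh y := by
  rw [Real.tanh_eq_sinh_div_cosh, Real.tanh_eq_sinh_div_cosh,
    div_lt_div_iff₀ (Real.cosh_pos x) (Real.cosh_pos y)]
  have h1 : Real.sinh (x - y) < 0 := Real.sinh_neg_iff.2 (by linarith)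
  rw [Real.sinh_sub] at h1; linarith

lemma tanh_nonneg {x : ℝ} (h : 0 ≤ x) : 0 ≤ Real.tanh x := by
  rw [Real.tanh_eq_sinh_div_cosh]
  exact div_nonneg (Real.sinh_nonneg_iff.2 h) (Real.cosh_pos x).le

lemma tanh_nonpos {x : ℝ} (h : x ≤ 0) : Real.tanh x ≤ 0 := by
  rw [Real.tanh_eq_sinh_div_cosh]
  exact div_nonpos_of_nonpos_of_nonneg (Real.sinh_nonpos_iff.2 h) (Real.cosh_pos x).le

lemma tanh_sq_add (x : ℝ) : Real.tanh x ^ 2 + 1 / Real.cosh x ^ 2 = 1 := by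
  have h := Real.cosh_sq_sub_sinh_sq x
  have hc := Real.cosh_pos x
  rw [Real.tanh_eq_sinh_div_cosh, div_pow]
  field_simp
  nlinarith

lemma continuous_tanh : Continuous Real.tanh := by
  have : Real.tanh = fun x => Real.sinh x / Real.cosh x := by
    funext x; exact Real.tanh_eq_sinh_div_cosh x
  rw [this]
  exact Real.continuous_sinh.div Real.continuous_cosh fun x => (Real.cosh_pos x).ne'

lemma exists_tanh_gt {c : ℝ} (hc : c < 1) : ∃ R : ℝ, 0 ≤ R ∧ c < Real.tanh R := by
  refine ⟨max 0 (-Real.log (1 - c) + 1), le_max_left _ _, ?_⟩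
  set R := max 0 (-Real.log (1 - c) + 1) with hR
  have hc1 : 0 < 1 - c := by linarith
  have h1 : Real.exp (-R) < 1 - c := by
    have hRge : -Real.log (1 - c) + 1 ≤ R := le_max_right _ _
    have : Real.exp (-R) ≤ Real.exp (Real.log (1 - c) - 1) := by
      apply Real.exp_le_exp.2; linarith
    have h2 : Real.exp (Real.log (1 - c) - 1) = (1 - c) * Real.exp (-1) := by
      rw [Real.exp_sub, Real.exp_log hc1, Real.exp_neg]; ring
    have h3 : Real.exp (-1 : ℝ) < 1 := by
      rw [Real.exp_lt_one_iff]; norm_num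
    have h4 : (1 - c) * Real.exp (-1) < 1 - c := mul_lt_of_lt_one_right hc1 h3
    linarith
  have h2 : 1 - Real.tanh R ≤ Real.exp (-R) := by
    have hcp := Real.cosh_pos R
    have h3 : 1 - Real.tanh R = Real.exp (-R) / Real.cosh R := by
      rw [Real.tanh_eq_sinh_div_cosh, ← Real.cosh_sub_sinh]
      field_simp
    rw [h3]
    exact div_le_self (Real.exp_pos _).le (Real.one_le_cosh R)
  linarith



end HartogsAux

open HartogsAux


/-- `Ψ(M)` is the whole open unit disk if and only if the completeness
integral `∫₀^{√b} √(−(xF'/F)'|_{x=u²}) du` diverges. -/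
theorem hartogsMap_surjective_iff_complete (b : EReal) (hb : 0 < b) (F : ℝ → ℝ)
    (hF : ContDiffOn ℝ (⊤ : ℕ∞) F {x : ℝ | 0 ≤ x ∧ (x : EReal) < b})
    (hFpos : ∀ x : ℝ, 0 ≤ x → (x : EReal) < b → 0 < F x)
    (hK : ∀ x : ℝ, 0 ≤ x → (x : EReal) < b →
      deriv (fun x : ℝ => x * deriv F x / F x) x < 0) :
    hartogsMap F '' {p : ℝ × ℝ | ((p.1 ^ 2 : ℝ) : EReal) < b ∧ p.2 ^ 2 < F (p.1 ^ 2)}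
        = {p : ℝ × ℝ | p.1 ^ 2 + p.2 ^ 2 < 1} ↔
      ∫⁻ u in {u : ℝ | 0 < u ∧ ((u ^ 2 : ℝ) : EReal) < b},
        ENNReal.ofReal
          (Real.sqrt (-(deriv (fun x : ℝ => x * deriv F x / F x) (u ^ 2)))) = ⊤ := by
  classical
  set S : Set ℝ := {x : ℝ | 0 ≤ x ∧ (x : EReal) < b} with hSdef
  set g : ℝ → ℝ := fun x : ℝ => x * deriv F x / F x with hgdef
  set O : Set ℝ := {x : ℝ | 0 < x ∧ (x : EReal) < b} with hOdef
  have hb0 : ((0 : ℝ) : EReal) < b := by rw [EReal.coe_zero]; exact hb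
  have hO_open : IsOpen O := by
    have h2 : IsOpen {x : ℝ | (x : EReal) < b} :=
      isOpen_Iio.preimage continuous_coe_real_ereal
    exact (isOpen_lt continuous_const continuous_id).inter h2
  have hOS : O ⊆ S := fun x hx => ⟨hx.1.le, hx.2⟩
  have h0S : (0 : ℝ) ∈ S := ⟨le_rfl, hb0⟩
  have hSconv : Convex ℝ S := by
    intro x hx y hy a c ha hc hac
    obtain ⟨hx0, hxb⟩ := hx
    obtain ⟨hy0, hyb⟩ := hy
    constructor
    · have := mul_nonneg ha hx0
      have := mul_nonneg hc hy0
      simpa using add_nonneg ‹0 ≤ a * x› ‹0 ≤ c * y›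
    · rcases le_total x y with h | h
      · have hle : a * x + c * y ≤ y := by nlinarith [mul_le_mul_of_nonneg_left h ha]
        exact lt_of_le_of_lt (EReal.coe_le_coe_iff.2 hle) hyb
      · have hle : a * x + c * y ≤ x := by nlinarith [mul_le_mul_of_nonneg_left h hc]
        exact lt_of_le_of_lt (EReal.coe_le_coe_iff.2 hle) hxb
  -- a positive real point below b
  obtain ⟨ε, hε0, hεb⟩ : ∃ ε : ℝ, 0 < ε ∧ (ε : EReal) < b := by
    obtain ⟨z, hz1, hz2⟩ := exists_between hb
    have hzbot : z ≠ ⊥ := fun h => by simp [h] at hz1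
    have hztop : z ≠ ⊤ := fun h => (not_top_lt (h ▸ hz2 : (⊤ : EReal) < b)).elim
    lift z to ℝ using ⟨hztop, hzbot⟩
    exact ⟨z, by exact_mod_cast hz1, hz2⟩
  have hUD : UniqueDiffOn ℝ S :=
    uniqueDiffOn_convex hSconv ⟨ε, (hO_open.subset_interior_iff.2 hOS) ⟨hε0, hεb⟩⟩
  have hSnhds : ∀ x ∈ O, S ∈ nhds x := fun x hx =>
    Filter.mem_of_superset (hO_open.mem_nhds hx) hOS
  have hFne : ∀ x ∈ S, F x ≠ 0 := fun x hx => (hFpos x hx.1 hx.2).ne'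
  -- the auxiliary smooth functions
  set g' : ℝ → ℝ := fun x : ℝ => x * derivWithin F S x / F x with hg'def
  set D : ℝ → ℝ := derivWithin g' S with hDdef
  have hF2 : ContDiffOn ℝ 2 F S := hF.of_le (WithTop.coe_le_coe.2 le_top)
  have hF'1 : ContDiffOn ℝ 1 (derivWithin F S) S :=
    hF2.derivWithin hUD (by norm_num)
  have hg'1 : ContDiffOn ℝ 1 g' S := by
    exact (contDiffOn_id.mul hF'1).div (hF.of_le (by simp)) hFne
  have hDcont : ContinuousOn D S := hg'1.continuousOn_derivWithin hUD le_rfl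
  have hgg' : Set.EqOn g g' S := by
    intro x hx
    rcases eq_or_lt_of_le hx.1 with h | h
    · simp only [hgdef, hg'def, ← h, zero_mul, zero_div]
    · have hderiv : derivWithin F S x = deriv F x := derivWithin_of_mem_nhds (hSnhds x ⟨h, hx.2⟩)
      simp only [hgdef, hg'def, hderiv]
  have hDO : ∀ x ∈ O, deriv g x = D x := by
    intro x hxO
    have h1 : g =ᶠ[nhds x] g' := by
      filter_upwards [hO_open.mem_nhds hxO] with y hy using hgg' (hOS hy)
    rw [h1.deriv_eq, hDdef, derivWithin_of_mem_nhds (hSnhds x hxO)]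
  have hDneg : ∀ x ∈ S, D x < 0 := by
    intro x hx
    rcases eq_or_lt_of_le hx.1 with h | h
    · have h1 : deriv g 0 < 0 := hK 0 le_rfl hb0
      have hdiff : DifferentiableAt ℝ g 0 := by
        by_contra hnd
        rw [deriv_zero_of_not_differentiableAt hnd] at h1
        exact lt_irrefl 0 h1
      have h2 : derivWithin g S 0 = deriv g 0 :=
        hdiff.hasDerivAt.hasDerivWithinAt.derivWithin (hUD 0 h0S)
      have h3 : derivWithin g S 0 = derivWithin g' S 0 := derivWithin_congr hgg' (hgg' h0S)
      rw [← h]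
      rw [hDdef, ← h3, h2]
      exact h1
    · rw [← hDO x ⟨h, hx.2⟩]
      exact hK x hx.1 hx.2
  -- membership helpers
  have hsqS : ∀ {u : ℝ}, ((u ^ 2 : ℝ) : EReal) < b → (u ^ 2) ∈ S := fun h => ⟨sq_nonneg _, h⟩
  have hTsq : ∀ {u s : ℝ}, ((u ^ 2 : ℝ) : EReal) < b → |s| ≤ |u| →
      ((s ^ 2 : ℝ) : EReal) < b := by
    intro u s hu hs
    have h1 : s ^ 2 ≤ u ^ 2 := by
      rw [← sq_abs s, ← sq_abs u]
      exact pow_le_pow_left₀ (abs_nonneg s) hs 2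
    exact lt_of_le_of_lt (EReal.coe_le_coe_iff.2 h1) hu
  -- the regularized integrand and primitive
  set h' : ℝ → ℝ := fun s : ℝ => Real.sqrt (-D (s ^ 2)) with hh'def
  set ψ : ℝ → ℝ := fun u : ℝ => ∫ s in (0 : ℝ)..u, h' s with hψdef
  have hh'pos : ∀ s : ℝ, ((s ^ 2 : ℝ) : EReal) < b → 0 < h' s := fun s hs =>
    Real.sqrt_pos.2 (neg_pos.2 (hDneg _ (hsqS hs)))
  have hh'eq : ∀ s : ℝ, s ≠ 0 → ((s ^ 2 : ℝ) : EReal) < b →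
      Real.sqrt (-(deriv g (s ^ 2))) = h' s := by
    intro s hs0 hsb
    have hsq : (0 : ℝ) < s ^ 2 := by positivity
    rw [hDO (s ^ 2) ⟨hsq, hsb⟩]
  have hh'cont : ∀ u : ℝ, 0 ≤ u → ((u ^ 2 : ℝ) : EReal) < b →
      ContinuousOn h' (Set.Icc 0 u) := by
    intro u hu hub
    apply Real.continuous_sqrt.comp_continuousOn
    apply ContinuousOn.neg
    apply hDcont.comp ((continuous_pow 2).continuousOn)
    intro s hs
    refine ⟨sq_nonneg _, ?_⟩
    have h1 : s ^ 2 ≤ u ^ 2 := pow_le_pow_left₀ hs.1 hs.2 2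
    exact lt_of_le_of_lt (EReal.coe_le_coe_iff.2 h1) hub
  have hae0 : ∀ᵐ x : ℝ, x ≠ (0 : ℝ) := by
    rw [MeasureTheory.ae_iff]
    have : {x : ℝ | ¬x ≠ 0} = {0} := by ext x; simp
    rw [this]
    exact Real.volume_singleton
  have hψeq : ∀ u : ℝ, ((u ^ 2 : ℝ) : EReal) < b → hartogsPsi F u = ψ u := by
    intro u hu
    unfold hartogsPsi
    rw [hψdef]
    apply intervalIntegral.integral_congr_ae
    filter_upwards [hae0] with s hs0 hsI
    have hsu : |s| ≤ |u| := by
      rcases le_total 0 u with hc | hc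
      · rw [Set.uIoc_of_le hc] at hsI
        rw [abs_of_pos hsI.1, abs_of_nonneg hc]; exact hsI.2
      · rw [Set.uIoc_of_ge hc] at hsI
        rw [abs_of_nonpos hsI.2, abs_of_nonpos hc]
        exact neg_le_neg hsI.1.le
    rw [← hgdef]
    exact hh'eq s hs0 (hTsq hu hsu)
  have hint : ∀ u : ℝ, 0 ≤ u → ((u ^ 2 : ℝ) : EReal) < b →
      MeasureTheory.IntegrableOn h' (Set.Icc 0 u) := fun u hu hub =>
    (hh'cont u hu hub).integrableOn_Icc
  have hψcont : ∀ u : ℝ, 0 ≤ u → ((u ^ 2 : ℝ) : EReal) < b →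
      ContinuousOn ψ (Set.Icc 0 u) := by
    intro u hu hub
    have h1 := intervalIntegral.continuousOn_primitive_interval
      (f := h') (a := (0:ℝ)) (b := u) (μ := MeasureTheory.volume) ?_
    · rwa [Set.uIcc_of_le hu] at h1
    · rw [Set.uIcc_of_le hu]; exact hint u hu hub
  have hψnonpos : ∀ u : ℝ, u ≤ 0 → ψ u ≤ 0 := by
    intro u hu
    have h1 : (0 : ℝ) ≤ ∫ s in u..(0:ℝ), h' s :=
      intervalIntegral.integral_nonneg hu fun s _ => Real.sqrt_nonneg _
    have h2 : ψ u = -∫ s in u..(0:ℝ), h' s := intervalIntegral.integral_symm u 0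
    rw [h2]; linarith
  have hψnonneg : ∀ u : ℝ, 0 ≤ u → 0 ≤ ψ u := fun u hu =>
    intervalIntegral.integral_nonneg hu fun s _ => Real.sqrt_nonneg _
  have hψodd : ∀ u : ℝ, ψ (-u) = -ψ u := by
    intro u
    have h1 : (fun s : ℝ => h' (-s)) = h' := by
      funext s; simp only [hh'def, neg_sq]
    have h2 : (∫ s in (0:ℝ)..u, h' (-s)) = ∫ s in (-u)..(0:ℝ), h' s := by
      simpa using intervalIntegral.integral_comp_neg (a := (0:ℝ)) (b := u) (f := h')
    have h3 : ψ u = ∫ s in (-u)..(0:ℝ), h' s := by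
      rw [← h2, h1]
    have h4 : ψ (-u) = -∫ s in (-u)..(0:ℝ), h' s := intervalIntegral.integral_symm (-u) 0
    rw [h4, ← h3]
  -- the ENNReal-valued integrand
  set H : ℝ → ENNReal := fun s : ℝ =>
    ENNReal.ofReal (Real.sqrt (-deriv g (s ^ 2))) with hHdef
  have hHmeas : Measurable H := by
    apply ENNReal.measurable_ofReal.comp
    apply Real.continuous_sqrt.measurable.comp
    exact ((measurable_deriv g).comp (measurable_id.pow_const 2)).neg
  set Ω : Set ℝ := {u : ℝ | 0 < u ∧ ((u ^ 2 : ℝ) : EReal) < b} with hΩdef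
  have hΩ_open : IsOpen Ω := by
    have h2 : IsOpen {u : ℝ | ((u ^ 2 : ℝ) : EReal) < b} :=
      isOpen_Iio.preimage (continuous_coe_real_ereal.comp (continuous_pow 2))
    exact (isOpen_lt continuous_const continuous_id).inter h2
  have hconv : ∀ u : ℝ, 0 < u → ((u ^ 2 : ℝ) : EReal) < b →
      ENNReal.ofReal (ψ u) = ∫⁻ s in Set.Ioc 0 u, H s := by
    intro u hu hub
    have hioc : MeasureTheory.IntegrableOn h' (Set.Ioc 0 u) :=
      (hint u hu.le hub).mono_set Set.Ioc_subset_Icc_self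
    have h1 : ψ u = ∫ s in Set.Ioc 0 u, h' s := intervalIntegral.integral_of_le hu.le
    rw [h1, MeasureTheory.ofReal_integral_eq_lintegral_ofReal hioc
      (MeasureTheory.ae_of_all _ fun s => Real.sqrt_nonneg _)]
    refine MeasureTheory.setLIntegral_congr_fun_ae measurableSet_Ioc ?_
    filter_upwards [hae0] with s hs0 hs
    have hsu : |s| ≤ |u| := by
      rw [abs_of_pos hs.1, abs_of_pos hu]; exact hs.2
    show ENNReal.ofReal (h' s) = ENNReal.ofReal (Real.sqrt (-deriv g (s ^ 2)))
    rw [hh'eq s hs0 (hTsq hub hsu)]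
  -- a cofinal monotone sequence in Ω
  obtain ⟨v, hv, hvmono, hvcof⟩ : ∃ v : ℕ → ℝ,
      (∀ n, 0 < v n ∧ ((v n ^ 2 : ℝ) : EReal) < b) ∧ Monotone v ∧
        ∀ x ∈ Ω, ∃ n, x ≤ v n := by
    by_cases hbtop : b = ⊤
    · refine ⟨fun n => (n : ℝ) + 1, fun n => ⟨by positivity, ?_⟩, ?_, ?_⟩
      · rw [hbtop]; exact EReal.coe_lt_top _
      · intro m n hmn
        have : (m : ℝ) ≤ (n : ℝ) := Nat.cast_le.2 hmn
        simp only
        linarith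
      · intro x hx
        obtain ⟨n, hn⟩ := exists_nat_ge x
        refine ⟨n, ?_⟩
        simp only
        linarith
    · have hbbot : b ≠ ⊥ := fun h => by rw [h] at hb; exact not_lt_bot hb
      have hbc : ((b.toReal : ℝ) : EReal) = b := EReal.coe_toReal hbtop hbbot
      set c : ℝ := b.toReal with hcdef
      have hc0 : 0 < c := by
        rw [← EReal.coe_lt_coe_iff, hbc]
        exact_mod_cast hb
      set r : ℝ := Real.sqrt c with hrdef
      have hr0 : 0 < r := Real.sqrt_pos.2 hc0
      have hr2 : r ^ 2 = c := Real.sq_sqrt hc0.le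
      refine ⟨fun n => r - r / ((n : ℝ) + 2), fun n => ⟨?_, ?_⟩, ?_, ?_⟩
      · have hn2 : (1 : ℝ) < (n : ℝ) + 2 := by
          have : (0 : ℝ) ≤ (n : ℝ) := Nat.cast_nonneg n
          linarith
        have := div_lt_self hr0 hn2
        linarith
      · have hn2 : (0 : ℝ) < (n : ℝ) + 2 := by positivity
        have hlt : r - r / ((n : ℝ) + 2) < r := by
          have : 0 < r / ((n : ℝ) + 2) := by positivity
          linarith
        have hge : (0 : ℝ) ≤ r - r / ((n : ℝ) + 2) := by
          have hn2' : (1 : ℝ) < (n : ℝ) + 2 := by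
            have : (0 : ℝ) ≤ (n : ℝ) := Nat.cast_nonneg n
            linarith
          have := div_lt_self hr0 hn2'
          linarith
        have hsq : (r - r / ((n : ℝ) + 2)) ^ 2 < c := by
          calc (r - r / ((n : ℝ) + 2)) ^ 2 < r ^ 2 := by
                exact pow_lt_pow_left₀ hlt hge (by norm_num)
            _ = c := hr2
        rw [← hbc]
        exact_mod_cast hsq
      · intro m n hmn
        have h1 : (m : ℝ) + 2 ≤ (n : ℝ) + 2 := by
          have : (m : ℝ) ≤ (n : ℝ) := Nat.cast_le.2 hmn
          linarith
        have h2 : r / ((n : ℝ) + 2) ≤ r / ((m : ℝ) + 2) := by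
          apply div_le_div_of_nonneg_left hr0.le (by positivity) h1
        simp only
        linarith
      · intro x hx
        obtain ⟨hx0, hxb⟩ := hx
        have hxc : x ^ 2 < c := by
          rw [← EReal.coe_lt_coe_iff, hbc]
          exact hxb
        have hxr : x < r := by
          have h1 : x = Real.sqrt (x ^ 2) := (Real.sqrt_sq hx0.le).symm
          rw [h1, hrdef]
          exact Real.sqrt_lt_sqrt (sq_nonneg _) hxc
        obtain ⟨n, hn⟩ := exists_nat_gt (r / (r - x))
        refine ⟨n, ?_⟩
        have hrx : 0 < r - x := by linarith
        have h2 : r < (r - x) * ((n : ℝ) + 2) := by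
          have h3 : r / (r - x) < (n : ℝ) + 2 := by
            have : (0:ℝ) ≤ (n:ℝ) := Nat.cast_nonneg n
            linarith
          calc r = r / (r - x) * (r - x) := by field_simp
            _ < ((n : ℝ) + 2) * (r - x) := by
                exact mul_lt_mul_of_pos_right h3 hrx
            _ = (r - x) * ((n : ℝ) + 2) := by ring
        have hn2 : (0 : ℝ) < (n : ℝ) + 2 := by positivity
        have h4 : r / ((n : ℝ) + 2) ≤ r - x := by
          rw [div_le_iff₀ hn2]
          nlinarith
        simp only
        linarith
  have hvΩ : ∀ n, v n ∈ Ω := fun n => ⟨(hv n).1, (hv n).2⟩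
  -- boundedness of ψ on Ω controls the lintegral
  have hIocΩ : ∀ n, Set.Ioc (0:ℝ) (v n) ⊆ Ω := by
    intro n s hs
    refine ⟨hs.1, hTsq (hv n).2 ?_⟩
    rw [abs_of_pos hs.1, abs_of_pos (hv n).1]
    exact hs.2
  have hsup : ∀ R : ℝ, (∀ u ∈ Ω, ψ u ≤ R) →
      (∫⁻ u in Ω, H u) ≤ ENNReal.ofReal R := by
    intro R hR
    set f : ℕ → ℝ → ENNReal := fun n => (Set.Ioc (0:ℝ) (v n)).indicator H with hfdef
    have hfm : ∀ n, Measurable (f n) := fun n => hHmeas.indicator measurableSet_Ioc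
    have hmono : Monotone f := by
      intro m n hmn s
      by_cases hs : s ∈ Set.Ioc (0:ℝ) (v m)
      · rw [hfdef]
        simp only
        rw [Set.indicator_of_mem hs,
          Set.indicator_of_mem (Set.Ioc_subset_Ioc_right (hvmono hmn) hs)]
      · rw [hfdef]
        simp only
        rw [Set.indicator_of_notMem hs]
        exact zero_le
    have hsupf : (fun s => ⨆ n, f n s) = Ω.indicator H := by
      funext s
      by_cases hsΩ : s ∈ Ω
      · rw [Set.indicator_of_mem hsΩ]
        obtain ⟨n, hn⟩ := hvcof s hsΩ
        apply le_antisymm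
        · apply iSup_le
          intro m
          exact Set.indicator_le_self _ _ s
        · apply le_iSup_of_le n
          rw [hfdef]
          simp only
          rw [Set.indicator_of_mem (show s ∈ Set.Ioc (0:ℝ) (v n) from ⟨hsΩ.1, hn⟩)]
      · rw [Set.indicator_of_notMem hsΩ]
        have hz : ∀ n, f n s = 0 := fun n =>
          Set.indicator_of_notMem (fun hs => hsΩ (hIocΩ n hs)) _
        simp [hz]
    calc (∫⁻ u in Ω, H u) = ∫⁻ u, Ω.indicator H u := by
          rw [MeasureTheory.lintegral_indicator hΩ_open.measurableSet]
      _ = ∫⁻ u, ⨆ n, f n u := by rw [hsupf]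
      _ = ⨆ n, ∫⁻ u, f n u := MeasureTheory.lintegral_iSup hfm hmono
      _ ≤ ENNReal.ofReal R := by
          apply iSup_le
          intro n
          rw [hfdef]
          simp only
          rw [MeasureTheory.lintegral_indicator measurableSet_Ioc,
            ← hconv (v n) (hv n).1 (hv n).2]
          exact ENNReal.ofReal_le_ofReal (hR (v n) (hvΩ n))
  have hIocsub : ∀ u : ℝ, u ∈ Ω → Set.Ioc (0:ℝ) u ⊆ Ω := by
    intro u hu s hs
    refine ⟨hs.1, hTsq hu.2 ?_⟩
    rw [abs_of_pos hs.1, abs_of_pos hu.1]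
    exact hs.2
  have htanh_mono : ∀ {a c : ℝ}, a ≤ c → Real.tanh a ≤ Real.tanh c := by
    intro a c hac
    rcases eq_or_lt_of_le hac with h | h
    · rw [h]
    · exact (tanh_lt_tanh h).le
  constructor
  · -- image is the disk → integral diverges
    intro himg
    by_contra hI
    have hub : ∀ u ∈ Ω, ψ u ≤ (∫⁻ u in Ω, H u).toReal := by
      intro u hu
      have h1 := hconv u hu.1 hu.2
      have h2 : (∫⁻ s in Set.Ioc (0:ℝ) u, H s) ≤ ∫⁻ u in Ω, H u :=
        MeasureTheory.lintegral_mono_set (hIocsub u hu)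
      calc ψ u = (ENNReal.ofReal (ψ u)).toReal :=
            (ENNReal.toReal_ofReal (hψnonneg u hu.1.le)).symm
        _ ≤ (∫⁻ u in Ω, H u).toReal := ENNReal.toReal_mono hI (h1 ▸ h2)
    set R : ℝ := max ((∫⁻ u in Ω, H u).toReal) 0 with hRdef
    have hR0 : 0 ≤ R := le_max_right _ _
    set x₀ : ℝ := (Real.tanh R + 1) / 2 with hx₀def
    have htR : Real.tanh R < 1 := tanh_lt_one R
    have htR0 : 0 ≤ Real.tanh R := tanh_nonneg hR0
    have hx₀lt : x₀ < 1 := by rw [hx₀def]; linarith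
    have hx₀pos : 0 < x₀ := by rw [hx₀def]; linarith
    have hx₀gt : Real.tanh R < x₀ := by rw [hx₀def]; linarith
    have hq : ((x₀, (0:ℝ)) : ℝ × ℝ) ∈ {p : ℝ × ℝ | p.1 ^ 2 + p.2 ^ 2 < 1} := by
      show x₀ ^ 2 + (0:ℝ) ^ 2 < 1
      nlinarith
    rw [← himg] at hq
    obtain ⟨p, hpM, hpq⟩ := hq
    have hfst : Real.tanh (hartogsPsi F p.1) = x₀ := by
      have := congrArg Prod.fst hpq
      simpa [hartogsMap] using this
    rw [hψeq p.1 hpM.1] at hfst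
    rcases le_or_gt p.1 0 with hle | hlt
    · have h3 : Real.tanh (ψ p.1) ≤ 0 := tanh_nonpos (hψnonpos p.1 hle)
      rw [hfst] at h3
      linarith
    · have hmem : p.1 ∈ Ω := ⟨hlt, hpM.1⟩
      have h3 : ψ p.1 ≤ R := le_trans (hub _ hmem) (le_max_left _ _)
      have h4 : Real.tanh (ψ p.1) ≤ Real.tanh R := htanh_mono h3
      rw [hfst] at h4
      linarith
  · -- integral diverges → image is the disk
    intro hI
    have hunb : ∀ R : ℝ, ∃ u ∈ Ω, R < ψ u := by
      intro R
      by_contra hcon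
      push_neg at hcon
      have h1 := hsup R hcon
      rw [hI] at h1
      exact ENNReal.ofReal_ne_top (top_le_iff.1 h1)
    apply Set.Subset.antisymm
    · -- image ⊆ disk
      rintro q ⟨p, hpM, rfl⟩
      obtain ⟨hp1, hp2⟩ := hpM
      show (hartogsMap F p).1 ^ 2 + (hartogsMap F p).2 ^ 2 < 1
      have hψp := hψeq p.1 hp1
      have hC := Real.cosh_pos (ψ p.1)
      have hFp : 0 < F (p.1 ^ 2) := hFpos _ (sq_nonneg _) hp1
      have hsF : Real.sqrt (F (p.1 ^ 2)) ^ 2 = F (p.1 ^ 2) := Real.sq_sqrt hFp.le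
      have h1 := tanh_sq_add (ψ p.1)
      have h2 : (hartogsMap F p).1 = Real.tanh (ψ p.1) := by
        simp [hartogsMap, hψp]
      have h3 : (hartogsMap F p).2 = p.2 / (Real.cosh (ψ p.1) * Real.sqrt (F (p.1 ^ 2))) := by
        simp [hartogsMap, hψp]
      rw [h2, h3]
      have h4 : (p.2 / (Real.cosh (ψ p.1) * Real.sqrt (F (p.1 ^ 2)))) ^ 2
          < 1 / Real.cosh (ψ p.1) ^ 2 := by
        rw [div_pow, mul_pow, hsF]
        rw [div_lt_div_iff₀ (by positivity) (by positivity)]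
        nlinarith [pow_pos hC 2]
      linarith
    · -- disk ⊆ image
      rintro ⟨x, y⟩ hq
      simp only [Set.mem_setOf_eq] at hq
      have hx1 : |x| < 1 := by
        rw [abs_lt]
        constructor <;> nlinarith [sq_nonneg y, sq_nonneg (x-1), sq_nonneg (x+1)]
      obtain ⟨R₀, hR₀0, hR₀⟩ := exists_tanh_gt hx1
      obtain ⟨u₀, hu₀Ω, hu₀⟩ := hunb R₀
      have hψu₀ : |x| < Real.tanh (ψ u₀) := lt_trans hR₀ (tanh_lt_tanh hu₀)
      have hcont : ContinuousOn (fun u => Real.tanh (ψ u)) (Set.Icc 0 u₀) :=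
        continuous_tanh.comp_continuousOn (hψcont u₀ hu₀Ω.1.le hu₀Ω.2)
      have hivt := intermediate_value_Icc hu₀Ω.1.le hcont
      have hmem : |x| ∈ Set.Icc (Real.tanh (ψ 0)) (Real.tanh (ψ u₀)) := by
        constructor
        · have hψ0 : ψ 0 = 0 := intervalIntegral.integral_same
          rw [hψ0, Real.tanh_zero]
          exact abs_nonneg x
        · exact hψu₀.le
      obtain ⟨u, huI, hu'⟩ := hivt hmem
      have hu : Real.tanh (ψ u) = |x| := hu'
      have hub : ((u ^ 2 : ℝ) : EReal) < b := by
        apply hTsq hu₀Ω.2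
        rw [abs_of_nonneg huI.1, abs_of_pos hu₀Ω.1]
        exact huI.2
      set w : ℝ := if x < 0 then -u else u with hwdef
      have hwsq : w ^ 2 = u ^ 2 := by
        rw [hwdef]; split_ifs
        · rw [neg_sq]
        · rfl
      have hwb : ((w ^ 2 : ℝ) : EReal) < b := by rw [hwsq]; exact hub
      have hwtanh : Real.tanh (ψ w) = x := by
        rw [hwdef]; split_ifs with hxneg
        · rw [hψodd, Real.tanh_neg, hu, abs_of_neg hxneg, neg_neg]
        · rw [hu, abs_of_nonneg (not_lt.1 hxneg)]
      have hFw : 0 < F (w ^ 2) := hFpos _ (sq_nonneg _) hwb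
      have hCw := Real.cosh_pos (ψ w)
      have hQ : 0 < Real.sqrt (F (w ^ 2)) := Real.sqrt_pos.2 hFw
      have hQ2 : Real.sqrt (F (w ^ 2)) ^ 2 = F (w ^ 2) := Real.sq_sqrt hFw.le
      refine ⟨(w, y * (Real.cosh (ψ w) * Real.sqrt (F (w ^ 2)))), ⟨hwb, ?_⟩, ?_⟩
      · show (y * (Real.cosh (ψ w) * Real.sqrt (F (w ^ 2)))) ^ 2 < F (w ^ 2)
        have hy2 : y ^ 2 < 1 - x ^ 2 := by nlinarith
        have hid := tanh_sq_add (ψ w)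
        rw [hwtanh] at hid
        have h5 : y ^ 2 * Real.cosh (ψ w) ^ 2 < 1 := by
          have h6 : 1 / Real.cosh (ψ w) ^ 2 = 1 - x ^ 2 := by linarith
          rw [← h6] at hy2
          have h7 := mul_lt_mul_of_pos_right hy2 (pow_pos hCw 2)
          rwa [div_mul_cancel₀] at h7
          positivity
        calc (y * (Real.cosh (ψ w) * Real.sqrt (F (w ^ 2)))) ^ 2
            = (y ^ 2 * Real.cosh (ψ w) ^ 2) * F (w ^ 2) := by
              rw [mul_pow, mul_pow, hQ2]; ring
          _ < 1 * F (w ^ 2) := mul_lt_mul_of_pos_right h5 hFw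
          _ = F (w ^ 2) := one_mul _
      · show (Real.tanh (hartogsPsi F w),
            y * (Real.cosh (ψ w) * Real.sqrt (F (w ^ 2)))
              / (Real.cosh (hartogsPsi F w) * Real.sqrt (F (w ^ 2)))) = (x, y)
        rw [hψeq w hwb]
        refine Prod.ext ?_ ?_
        · exact hwtanh
        · show y * (Real.cosh (ψ w) * Real.sqrt (F (w ^ 2)))
              / (Real.cosh (ψ w) * Real.sqrt (F (w ^ 2))) = y
          rw [mul_div_assoc, div_self (by positivity), mul_one]
end

section
/- Let b ∈ (0,∞] and F : [0,b) → (0,∞) smooth, non-increasing, with (xF'/F)' < 0 on [0,b). Then for all (u,v) ∈ ℝ² with u² < b, v² < F(u²), and u ≠ 0, v ≠ 0, the off-diagonal metric coefficient g₁₂(u,v) = −2F'(u²)·u·v/(F(u²) − v²)² is nonzero; in particular F'(x) < 0 for all x ∈ (0,b). -/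
/-- under the Kähler condition, `F' < 0` on `(0,b)` and the off-diagonal
metric coefficient `g₁₂(u,v) = −2F'(u²)uv/(F(u²)−v²)²` is nonzero whenever `u,v ≠ 0`. -/
theorem hartogs_offdiagonal_nonzero (b : EReal) (hb : 0 < b) (F : ℝ → ℝ)
    (hF : ContDiffOn ℝ (⊤ : ℕ∞) F {x : ℝ | 0 ≤ x ∧ (x : EReal) < b})
    (hFpos : ∀ x : ℝ, 0 ≤ x → (x : EReal) < b → 0 < F x)
    (hFmono : AntitoneOn F {x : ℝ | 0 ≤ x ∧ (x : EReal) < b})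
    (hK : ∀ x : ℝ, 0 ≤ x → (x : EReal) < b →
      deriv (fun x : ℝ => x * deriv F x / F x) x < 0) :
    (∀ x : ℝ, 0 < x → (x : EReal) < b → deriv F x < 0) ∧
    (∀ u v : ℝ, u ≠ 0 → v ≠ 0 → ((u ^ 2 : ℝ) : EReal) < b → v ^ 2 < F (u ^ 2) →
      -2 * deriv F (u ^ 2) * u * v / (F (u ^ 2) - v ^ 2) ^ 2 ≠ 0) := by
  set S : Set ℝ := {x : ℝ | 0 ≤ x ∧ (x : EReal) < b} with hS
  set G : ℝ → ℝ := fun x : ℝ => x * deriv F x / F x with hG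
  have hconv : Convex ℝ S := by
    intro x hx y hy a c ha hc hac
    constructor
    · have := hx.1
      have := hy.1
      simp only [smul_eq_mul]
      positivity
    · have hxy : a • x + c • y ≤ max x y := by
        calc a • x + c • y ≤ a • max x y + c • max x y := by
              gcongr <;> simp [le_max_left, le_max_right]
        _ = max x y := by rw [← add_smul, hac, one_smul]
      have : ((a • x + c • y : ℝ) : EReal) ≤ ((max x y : ℝ) : EReal) := by
        exact_mod_cast hxy
      refine lt_of_le_of_lt this ?_
      rcases max_cases x y with ⟨h1, _⟩ | ⟨h1, _⟩ <;> rw [h1]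
      exacts [hx.2, hy.2]
  have hdiffG : ∀ x ∈ S, DifferentiableAt ℝ G x := fun x hx =>
    differentiableAt_of_deriv_ne_zero (ne_of_lt (hK x hx.1 hx.2))
  have hcont : ContinuousOn G S := fun x hx => (hdiffG x hx).continuousAt.continuousWithinAt
  have hanti : StrictAntiOn G S := by
    apply strictAntiOn_of_deriv_neg hconv hcont
    intro x hx
    have hx' : x ∈ S := interior_subset hx
    exact hK x hx'.1 hx'.2
  have h0 : (0 : ℝ) ∈ S := ⟨le_refl 0, by exact_mod_cast hb⟩
  have key : ∀ x : ℝ, 0 < x → (x : EReal) < b → deriv F x < 0 := by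
    intro x hx hxb
    have hxS : x ∈ S := ⟨hx.le, hxb⟩
    have := hanti h0 hxS hx
    have hG0 : G 0 = 0 := by simp [hG]
    rw [hG0] at this
    have hFx : 0 < F x := hFpos x hx.le hxb
    have hnum : x * deriv F x < 0 := by
      by_contra hcon
      push_neg at hcon
      have : 0 ≤ G x := div_nonneg hcon hFx.le
      linarith
    nlinarith
  refine ⟨key, ?_⟩
  intro u v hu hv hub hvF
  have hu2 : (0 : ℝ) < u ^ 2 := by positivity
  have hd : deriv F (u ^ 2) < 0 := key _ hu2 hub
  have hden : (0 : ℝ) < (F (u ^ 2) - v ^ 2) ^ 2 := by nlinarith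
  have hnum : -2 * deriv F (u ^ 2) * u * v ≠ 0 := by
    apply mul_ne_zero (mul_ne_zero (mul_ne_zero (by norm_num) hd.ne) hu) hv
  exact div_ne_zero hnum hden.ne'
end
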